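/- For every n > 1, the points P₁ = (-1, 0, 0) and P₂ = (2(n-2)/(2n-1), n(4n-5)/((n-1)(2n-1)), 0) in coordinates (u₁, u₂, u₄) are equilibrium points of the vacuum dynamical system for f(R) = Rⁿ gravity, i.e. G vanishes at P₁ and P₂. -/
import Mathlib

/-- The vacuum dynamical system for Bianchi I cosmology in `f(R) = Rⁿ` gravity
(`n > 1`, constant `Γ = 1/(n-1)`), in coordinates `(u₁, u₂, u₄)`. -/
noncomputable def monomialVacuumField (n u₁ u₂ u₄ : ℝ) : ℝ × ℝ × ℝ :=
  (u₁^2 + u₁ * (u₂ - u₄^2 - 3) + 2 * (u₂ + 2*u₄^2 - 2),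
   -u₁ * u₂ / (n - 1) + 2 * u₂ * (u₂ - u₄^2 - 2),
   u₄ * (u₁ + u₂ - u₄^2 + 1))

/-- For every `n > 1`, the points `P₁ = (-1, 0, 0)` and
`P₂ = (2(n-2)/(2n-1), n(4n-5)/((n-1)(2n-1)), 0)` are equilibrium points of the
vacuum dynamical system for `f(R) = Rⁿ` gravity. -/
theorem monomial_vacuum_equilibria (n : ℝ) (hn : 1 < n) :
    monomialVacuumField n (-1) 0 0 = (0, 0, 0) ∧
    monomialVacuumField n (2*(n-2)/(2*n-1))
      (n*(4*n-5)/((n-1)*(2*n-1))) 0 = (0, 0, 0) := by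
  have h1 : n - 1 ≠ 0 := by linarith
  have h2 : 2*n - 1 ≠ 0 := by nlinarith
  constructor <;> simp only [monomialVacuumField, Prod.mk.injEq] <;>
    refine ⟨?_, ?_, ?_⟩ <;> (field_simp; try ring)
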